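/- Let f, g ∈ ℝ[x,y,λ] and let h = gcd(f,g), with f = f̄·h and g = ḡ·h. Let a ∈ ℝ be such that: the leading coefficients of f and g with respect to x do not vanish at λ = a, the leading coefficients of f and g with respect to y do not vanish at λ = a, and neither Res_x(f̄, ḡ) nor Res_y(f̄, ḡ) vanishes at λ = a. Then gcd(f(x,y,a), g(x,y,a)) = h(x,y,a) (up to a unit in ℝ). -/

import Mathlib

/-!
Since `f = f̄ h` and `g = ḡ h`, it suffices that `f̄(x,y,a)` and `ḡ(x,y,a)` are relatively prime.
The resultant lies in the ideal of its arguments, `Res_x(f̄,ḡ) = u f̄ + v ḡ`, and this identity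
survives the specialization `λ = a`; so a common divisor of `f̄(x,y,a)` and `ḡ(x,y,a)` divides the
nonzero polynomial `Res_x(f̄,ḡ)(y,a)` and has degree `0` in `x`. Exchanging `x` and `y`, it also
has degree `0` in `y`, hence is a nonzero constant.
-/

open Polynomial

/-- The Sylvester matrix of two univariate polynomials. -/
noncomputable def sylvesterMat {R : Type*} [CommRing R] (p q : R[X]) :
    Matrix (Fin (q.natDegree + p.natDegree)) (Fin (q.natDegree + p.natDegree)) R :=
  Matrix.of fun i j =>
    if (i : ℕ) < q.natDegree then
      (if (i : ℕ) ≤ (j : ℕ) ∧ (j : ℕ) ≤ (i : ℕ) + p.natDegree then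
        p.coeff (p.natDegree + (i : ℕ) - (j : ℕ)) else 0)
    else
      (if (i : ℕ) - q.natDegree ≤ (j : ℕ) ∧
          (j : ℕ) ≤ ((i : ℕ) - q.natDegree) + q.natDegree then
        q.coeff (q.natDegree + ((i : ℕ) - q.natDegree) - (j : ℕ)) else 0)

/-- The resultant of two univariate polynomials, as the determinant of the
Sylvester matrix. -/
noncomputable def res {R : Type*} [CommRing R] (p q : R[X]) : R :=
  (sylvesterMat p q).det

/-- `h` is a gcd of `f` and `g` (well defined up to a unit). -/
def IsGCDOf {R : Type*} [CommRing R] (h f g : R) : Prop :=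
  h ∣ f ∧ h ∣ g ∧ ∀ d : R, d ∣ f → d ∣ g → d ∣ h

/-- The ring `ℝ[x,y,λ]`, written as `((ℝ[λ])[y])[x]`: `x` is the outer
variable, `y` the middle one and `λ` the inner one. -/
noncomputable abbrev R3 := Polynomial (Polynomial (Polynomial ℝ))

/-- The swap of the variables `x` and `y`, carrying `((ℝ[λ])[y])[x]` to
`((ℝ[λ])[x])[y]` (the same ring, with the roles of the two outer variables
exchanged). -/
noncomputable def pswap : R3 →+* R3 :=
  eval₂RingHom
    (eval₂RingHom ((Polynomial.C.comp Polynomial.C : Polynomial ℝ →+* R3))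
      (Polynomial.X : R3))
    (Polynomial.C (Polynomial.X : Polynomial (Polynomial ℝ)))

/-- The specialization `λ := a`, from `ℝ[x,y,λ]` to `ℝ[x,y] = (ℝ[y])[x]`. -/
noncomputable def specAt (a : ℝ) : R3 →+* Polynomial (Polynomial ℝ) :=
  mapRingHom (mapRingHom (evalRingHom a))

namespace Polynomial

/-- `sylvesterMat p q` is Mathlib's `sylvester p q` transposed, with rows and columns listed in
reverse order. -/
theorem res_eq_resultant {R : Type*} [CommRing R] (p q : R[X]) : res p q = p.resultant q := by
  let e : Fin (p.natDegree + q.natDegree) ≃ Fin (q.natDegree + p.natDegree) :=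
    (finCongr (add_comm _ _)).trans Fin.revPerm
  rw [res, resultant, ← Matrix.det_transpose, ← Matrix.det_reindex_self e]
  congr 1
  ext i j
  obtain ⟨k, rfl⟩ := e.surjective j
  obtain ⟨l, rfl⟩ := e.surjective i
  simp only [Matrix.reindex_apply, Matrix.submatrix_apply, Equiv.symm_apply_apply,
    Matrix.transpose_apply, sylvesterMat, Matrix.of_apply, sylvester]
  induction l using Fin.addCases <;> induction k using Fin.addCases <;>
    simp only [e, Equiv.trans_apply, finCongr_apply, Fin.revPerm_apply, Fin.val_rev, Fin.val_cast,
      Fin.val_castAdd, Fin.cast_natAdd, Fin.val_addNat, Fin.val_natAdd, tsub_le_iff_right,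
      Set.mem_Icc, Fin.addCases_left, Fin.addCases_right] <;>
    rename_i k l <;> have := k.isLt <;> have := l.isLt <;>
    split_ifs <;> first | rfl | omega | (congr 1; omega)

theorem map_ne_zero_of_leadingCoeff_ne_zero {R S : Type*} [Semiring R] [Semiring S]
    (φ : R →+* S) {p : R[X]} (hp : φ p.leadingCoeff ≠ 0) : p.map φ ≠ 0 := by
  rwa [← leadingCoeff_ne_zero, leadingCoeff_map_of_leadingCoeff_ne_zero φ hp]

theorem natDegree_eq_zero_of_dvd_map_of_dvd_map {S T : Type*} [CommRing S] [CommRing T]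
    [IsDomain T] (φ : S →+* T) {p q : S[X]} {d : T[X]} (hp : p.map φ ≠ 0)
    (hres : φ (res p q) ≠ 0) (hdp : d ∣ p.map φ) (hdq : d ∣ q.map φ) : d.natDegree = 0 := by
  -- When both degrees vanish the Sylvester matrix is empty and `res p q = 1` says nothing.
  by_cases hpq : p.natDegree = 0 ∧ q.natDegree = 0
  · have := natDegree_le_of_dvd hdp hp
    have := natDegree_map_le (f := φ) (p := p)
    omega
  · obtain ⟨u, v, -, -, huv⟩ :=
      exists_mul_add_mul_eq_C_resultant p q le_rfl le_rfl (by tauto)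
    have hbezout : p.map φ * u.map φ + q.map φ * v.map φ = C (φ (res p q)) := by
      simpa [res_eq_resultant] using congrArg (map φ) huv
    have hd : d ∣ C (φ (res p q)) :=
      hbezout ▸ dvd_add (hdp.mul_right _) (hdq.mul_right _)
    simpa using natDegree_le_of_dvd hd (C_ne_zero.mpr hres)

namespace Bivariate

theorem swap_map_mapRingHom {R S : Type*} [CommRing R] [CommRing S] (φ : R →+* S)
    (p : R[X][Y]) : swap (p.map (mapRingHom φ)) = (swap p).map (mapRingHom φ) := by
  induction p using Polynomial.induction_on' with
  | add p q hp hq => simp only [Polynomial.map_add, map_add, hp, hq]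
  | monomial n f =>
    simp only [map_monomial, swap_monomial, Polynomial.map_mul, Polynomial.map_map, map_C,
      coe_mapRingHom, Polynomial.map_pow, map_X]
    congr 2
    exact (mapRingHom_comp_C φ).symm

theorem isUnit_of_natDegree_eq_zero_of_natDegree_swap_eq_zero {K : Type*} [Field K]
    {d : K[X][Y]} (hd : d ≠ 0) (hx : d.natDegree = 0) (hy : (swap d).natDegree = 0) :
    IsUnit d := by
  obtain ⟨d₀, rfl⟩ := natDegree_eq_zero.mp hx
  rw [swap_C, natDegree_map_eq_of_injective C_injective] at hy
  obtain ⟨c, rfl⟩ := natDegree_eq_zero.mp hy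
  exact isUnit_C.mpr (isUnit_C.mpr (isUnit_iff_ne_zero.mpr fun hc => hd (by simp [hc])))

end Bivariate

open Bivariate in
theorem isRelPrime_map_map_of_res_ne_zero {R K : Type*} [CommRing R] [Field K] (φ : R →+* K)
    {p q : R[X][Y]} (hp : p.map (mapRingHom φ) ≠ 0) (hp' : (swap p).map (mapRingHom φ) ≠ 0)
    (hres : (res p q).map φ ≠ 0) (hres' : (res (swap p) (swap q)).map φ ≠ 0) :
    IsRelPrime (p.map (mapRingHom φ)) (q.map (mapRingHom φ)) := by
  intro d hdp hdq
  have hd : d ≠ 0 := by rintro rfl; exact hp (zero_dvd_iff.mp hdp)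
  refine isUnit_of_natDegree_eq_zero_of_natDegree_swap_eq_zero hd
    (natDegree_eq_zero_of_dvd_map_of_dvd_map _ hp hres hdp hdq)
    (natDegree_eq_zero_of_dvd_map_of_dvd_map _ hp' hres' ?_ ?_) <;>
  rw [← swap_map_mapRingHom] <;> exact _root_.map_dvd swap ‹_›

end Polynomial

theorem IsRelPrime.isGCDOf_mul_right {R : Type*} [CommRing R] [IsDomain R] [GCDMonoid R]
    {a b : R} (hab : IsRelPrime a b) (c : R) : IsGCDOf c (a * c) (b * c) :=
  ⟨dvd_mul_left c a, dvd_mul_left c b, fun _ hda hdb =>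
    (dvd_gcd hda hdb).trans <| (gcd_mul_right' c a b).dvd.trans <|
      (gcd_isUnit_iff_isRelPrime.mpr hab).mul_left_dvd.mpr dvd_rfl⟩

theorem pswap_apply (p : R3) : pswap p = Polynomial.Bivariate.swap p := by
  suffices pswap = (Polynomial.Bivariate.swap : R3 ≃ₐ[ℝ[X]] R3).toRingEquiv.toRingHom from
    congr($this p)
  refine ringHom_ext' (ringHom_ext' ?_ ?_) ?_
  · exact RingHom.ext fun r => by simp [pswap, Polynomial.Bivariate.swap_C_C]
  · simp [pswap, Polynomial.Bivariate.swap_X]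
  · simp [pswap, Polynomial.Bivariate.swap_Y]

theorem specialization_of_gcd_general (f g fb gb h : R3) (a : ℝ)
    (hf : f = fb * h) (hg : g = gb * h)
    (hlcx_f : (Polynomial.map (evalRingHom a) f.leadingCoeff) ≠ 0)
    (hlcy_f : (Polynomial.map (evalRingHom a) (pswap f).leadingCoeff) ≠ 0)
    (hresx : (Polynomial.map (evalRingHom a) (res fb gb)) ≠ 0)
    (hresy : (Polynomial.map (evalRingHom a) (res (pswap fb) (pswap gb))) ≠ 0) :
    IsGCDOf (specAt a h) (specAt a f) (specAt a g) := by
  subst hf hg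
  have hfb : specAt a fb ≠ 0 := by
    refine left_ne_zero_of_mul (b := specAt a h) ?_
    rw [← map_mul]
    exact map_ne_zero_of_leadingCoeff_ne_zero _ hlcx_f
  have hfb' : specAt a (pswap fb) ≠ 0 := by
    refine left_ne_zero_of_mul (b := specAt a (pswap h)) ?_
    rw [← map_mul, ← map_mul]
    exact map_ne_zero_of_leadingCoeff_ne_zero _ hlcy_f
  simp only [pswap_apply] at hfb' hresy
  have : GCDMonoid ℝ[X][X] := UniqueFactorizationMonoid.toGCDMonoid _
  rw [map_mul, map_mul]
  exact (isRelPrime_map_map_of_res_ne_zero (evalRingHom a) hfb hfb' hresx hresy).isGCDOf_mul_right _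

/-- if `h = gcd(f,g)`, and `a ∈ ℝ` is such that the leading
coefficients of `f` and `g` with respect to `x` and with respect to `y` do not
vanish at `λ = a`, and neither `Res_x(f̄,ḡ)` nor `Res_y(f̄,ḡ)` vanishes
(identically) at `λ = a`, then `h(x,y,a)` is a gcd of `f(x,y,a)` and
`g(x,y,a)` (i.e. the gcd specializes, up to a unit). -/
theorem specialization_of_gcd (f g fb gb h : R3) (a : ℝ)
    (hgcd : IsGCDOf h f g) (hf : f = fb * h) (hg : g = gb * h)
    (hlcx_f : (Polynomial.map (evalRingHom a) f.leadingCoeff) ≠ 0)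
    (hlcx_g : (Polynomial.map (evalRingHom a) g.leadingCoeff) ≠ 0)
    (hlcy_f : (Polynomial.map (evalRingHom a) (pswap f).leadingCoeff) ≠ 0)
    (hlcy_g : (Polynomial.map (evalRingHom a) (pswap g).leadingCoeff) ≠ 0)
    (hresx : (Polynomial.map (evalRingHom a) (res fb gb)) ≠ 0)
    (hresy : (Polynomial.map (evalRingHom a) (res (pswap fb) (pswap gb))) ≠ 0) :
    IsGCDOf (specAt a h) (specAt a f) (specAt a g) :=
  specialization_of_gcd_general f g fb gb h a hf hg hlcx_f hlcy_f hresx hresy
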